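/- arXiv:1905.11748 — 2 statements merged into one kernel-verified Lean document; each statement's English description precedes it below -/
import Mathlib

section
/- Let L be a lattice with top element, A a complete commutative residuated lattice whose monoid operation ⊗ distributes over arbitrary joins, and (L, □, ◇) a lattice expansion where ◇ : L → L satisfies ◇(a ∧ b) ≤ ◇a ∧ ◇b. If f : L → A preserves finite meets and maps the top of L to the top of A (an A-filter), then f⁻◇ : L → A defined by f⁻◇(a) = ⋁{f(b) : ◇b ≤ a} is also an A-filter. -/
/-- If `f : L → A` is an `A`-filter (finite-meet- and top-preserving),
`A` is frame-distributive (binary meets distribute over arbitrary joins), and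
`◇ : L → L` is monotone with `◇(a ⊓ b) ≤ ◇a ⊓ ◇b`, then
`f⁻◇(a) = ⋁ {f b : ◇ b ≤ a}` is again an `A`-filter. -/
theorem fminusdia_is_filter
    {L : Type*} [Lattice L] [OrderTop L]
    {A : Type*} [CompleteLattice A]
    (hframe : ∀ (x : A) (s : Set A), x ⊓ sSup s = ⨆ y ∈ s, x ⊓ y)
    (dia : L → L) (hmono : Monotone dia)
    (hdia : ∀ a b : L, dia (a ⊓ b) ≤ dia a ⊓ dia b)
    (f : L → A) (hftop : f ⊤ = ⊤) (hfmeet : ∀ a b : L, f (a ⊓ b) = f a ⊓ f b) :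
    (sSup (f '' {b : L | dia b ≤ ⊤}) = ⊤) ∧
      ∀ a b : L, sSup (f '' {c : L | dia c ≤ a ⊓ b})
        = sSup (f '' {c : L | dia c ≤ a}) ⊓ sSup (f '' {c : L | dia c ≤ b}) := by
  constructor
  · apply le_antisymm le_top
    rw [← hftop]
    exact le_sSup ⟨⊤, le_top, rfl⟩
  · intro a b
    apply le_antisymm
    · apply le_inf <;> apply sSup_le_sSup <;> apply Set.image_mono <;>
        intro c hc <;> exact le_trans hc (by simp)
    · rw [hframe, iSup₂_le_iff]
      rintro x ⟨c, hc, rfl⟩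
      rw [inf_comm, hframe, iSup₂_le_iff]
      rintro y ⟨d, hd, rfl⟩
      rw [inf_comm, ← hfmeet]
      apply le_sSup
      exact ⟨d ⊓ c, le_trans (hdia d c) (inf_le_inf hd hc), rfl⟩
end

section
/- Let L be a lattice with bottom element, A a complete commutative residuated lattice, and □ : L → L a monotone map with □a ∧ □b ≤ □(a ∧ b). If u : L → A preserves finite joins and maps the bottom of L to the bottom of A (the complement of an A-ideal), then u⁻□ : L → A defined by u⁻□(a) = ⋀{u(b) : a ≤ □b} is also finite-join-preserving and bottom-preserving. -/
/-- If `u : L → A` is the complement of an `A`-ideal (finite-join- and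
bottom-preserving), `□ : L → L` is monotone with `□a ⊓ □b ≤ □(a ⊓ b)`, and in `A` binary
joins distribute over arbitrary meets, then `u⁻□(a) = ⋀ {u b : a ≤ □ b}` is again
finite-join-preserving and bottom-preserving. -/
theorem uminusbox_is_ideal_complement
    {L : Type*} [Lattice L] [OrderBot L]
    {A : Type*} [CompleteLattice A]
    (hframe : ∀ (x : A) (s : Set A), x ⊔ sInf s = ⨅ y ∈ s, x ⊔ y)
    (box : L → L) (hmono : Monotone box)
    (hbox : ∀ a b : L, box a ⊓ box b ≤ box (a ⊓ b))
    (u : L → A) (hubot : u ⊥ = ⊥) (hujoin : ∀ a b : L, u (a ⊔ b) = u a ⊔ u b) :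
    (sInf (u '' {b : L | (⊥ : L) ≤ box b}) = ⊥) ∧
      ∀ a b : L, sInf (u '' {c : L | a ⊔ b ≤ box c})
        = sInf (u '' {c : L | a ≤ box c}) ⊔ sInf (u '' {c : L | b ≤ box c}) := by
  constructor
  · refine le_bot_iff.mp ?_
    calc sInf (u '' {b : L | (⊥ : L) ≤ box b}) ≤ u ⊥ :=
          sInf_le ⟨⊥, by simp, rfl⟩
      _ = ⊥ := hubot
  · intro a b
    apply le_antisymm
    · -- ≤ : using frame distributivity
      rw [hframe, le_iInf_iff]
      intro y
      rw [le_iInf_iff]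
      rintro ⟨d, hd, rfl⟩
      rw [sup_comm (sInf (u '' {c : L | a ≤ box c})) (u d), hframe, le_iInf_iff]
      intro z
      rw [le_iInf_iff]
      rintro ⟨c, hc, rfl⟩
      have : a ⊔ b ≤ box (d ⊔ c) := by
        exact sup_le (le_trans hc (hmono le_sup_right)) (le_trans hd (hmono le_sup_left))
      calc sInf (u '' {c : L | a ⊔ b ≤ box c}) ≤ u (d ⊔ c) := sInf_le ⟨d ⊔ c, this, rfl⟩
        _ = u d ⊔ u c := hujoin d c
    · refine sup_le (le_sInf ?_) (le_sInf ?_) <;>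
      · rintro y ⟨c, hc, rfl⟩
        exact sInf_le ⟨c, le_trans (by simp) hc, rfl⟩
end
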